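/- Let R_0, R_1, R_2, C_1, C_2, Q, β be strictly positive real numbers, and let t_s be a real number satisfying 0 < t_s ≤ min{R_1 C_1, R_2 C_2} and t_s ≤ R_0 / (1/C_1 + 1/C_2 + β/Q). Define g : ℕ → ℝ by g(0) = R_0 and, for t ≥ 1, g(t) = (t_s/C_1)(1 − t_s/(R_1 C_1))^{t−1} + (t_s/C_2)(1 − t_s/(R_2 C_2))^{t−1} + t_s β / Q. Then g is decreasing: g(t) ≥ g(t+1) for all t ∈ ℕ. -/

import Mathlib

/-!
From `t = 1` on, `g` is a constant plus nonnegative multiples of powers of the ratios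
`1 - t_s/(R_i C_i)`, which lie in `[0, 1]` because the sampling time does not exceed either time
constant; so `g` is antitone there. The remaining step `g 1 ≤ g 0` reads
`t_s (1/C_1 + 1/C_2 + β/Q) ≤ R_0`, which is the second bound on `t_s`.
-/

/-- The impulse response of the forward-Euler discretized two-time-constant
equivalent-circuit battery model: `g(0) = R₀` and for `t ≥ 1`,
`g(t) = (t_s/C₁)(1 − t_s/(R₁C₁))^{t−1} + (t_s/C₂)(1 − t_s/(R₂C₂))^{t−1} + t_s β/Q`. -/
noncomputable def ecmImpulse (R0 R1 R2 C1 C2 Q β ts : ℝ) : ℕ → ℝ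
  | 0 => R0
  | t + 1 => (ts / C1) * (1 - ts / (R1 * C1)) ^ t
      + (ts / C2) * (1 - ts / (R2 * C2)) ^ t + ts * β / Q

lemma one_sub_div_mem_Icc {x τ : ℝ} (hx : 0 ≤ x) (hxτ : x ≤ τ) : 1 - x / τ ∈ Set.Icc 0 1 := by
  have hτ : 0 ≤ τ := hx.trans hxτ
  constructor
  · simpa only [sub_nonneg] using div_le_one_of_le₀ hxτ hτ
  · simpa only [sub_le_self_iff] using div_nonneg hx hτ

lemma antitone_mul_pow_add_mul_pow_add {R : Type*} [Semiring R] [PartialOrder R]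
    [IsOrderedRing R] {c₁ c₂ a₁ a₂ : R} (d : R) (hc₁ : 0 ≤ c₁) (hc₂ : 0 ≤ c₂)
    (ha₁ : a₁ ∈ Set.Icc 0 1) (ha₂ : a₂ ∈ Set.Icc 0 1) :
    Antitone fun t : ℕ => c₁ * a₁ ^ t + c₂ * a₂ ^ t + d :=
  (((pow_right_anti₀ ha₁.1 ha₁.2).const_mul hc₁).add
    ((pow_right_anti₀ ha₂.1 ha₂.2).const_mul hc₂)).add antitone_const

lemma ecmImpulse_succ_antitone {R0 R1 R2 C1 C2 Q β ts : ℝ} (hC1 : 0 ≤ C1) (hC2 : 0 ≤ C2)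
    (hts : 0 ≤ ts) (hts1 : ts ≤ R1 * C1) (hts2 : ts ≤ R2 * C2) :
    Antitone fun t => ecmImpulse R0 R1 R2 C1 C2 Q β ts (t + 1) :=
  antitone_mul_pow_add_mul_pow_add _ (div_nonneg hts hC1) (div_nonneg hts hC2)
    (one_sub_div_mem_Icc hts hts1) (one_sub_div_mem_Icc hts hts2)

lemma ecmImpulse_one_le_zero {R0 R1 R2 C1 C2 Q β ts : ℝ}
    (hS : 0 < 1 / C1 + 1 / C2 + β / Q) (hts : ts ≤ R0 / (1 / C1 + 1 / C2 + β / Q)) :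
    ecmImpulse R0 R1 R2 C1 C2 Q β ts 1 ≤ ecmImpulse R0 R1 R2 C1 C2 Q β ts 0 := by
  have hone : ecmImpulse R0 R1 R2 C1 C2 Q β ts 1 = ts * (1 / C1 + 1 / C2 + β / Q) := by
    simp only [ecmImpulse]
    ring
  rw [hone]
  exact (le_div_iff₀ hS).mp hts

theorem ecmImpulse_decreasing_general (R0 R1 R2 C1 C2 Q β ts : ℝ)
    (hC1 : 0 < C1) (hC2 : 0 < C2) (hQ : 0 < Q) (hβ : 0 < β)
    (hts : 0 < ts)
    (hts1 : ts ≤ min (R1 * C1) (R2 * C2))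
    (hts2 : ts ≤ R0 / (1 / C1 + 1 / C2 + β / Q)) :
    ∀ t : ℕ, ecmImpulse R0 R1 R2 C1 C2 Q β ts (t + 1) ≤
      ecmImpulse R0 R1 R2 C1 C2 Q β ts t := by
  rintro (_ | t)
  · exact ecmImpulse_one_le_zero (by positivity) hts2
  · obtain ⟨hts1₁, hts1₂⟩ := le_min_iff.mp hts1
    exact ecmImpulse_succ_antitone hC1.le hC2.le hts.le hts1₁ hts1₂ t.le_succ

/-- If `0 < t_s ≤ min{R₁C₁, R₂C₂}` and `t_s ≤ R₀/(1/C₁ + 1/C₂ + β/Q)`, then the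
impulse response of the discretized equivalent-circuit model is decreasing. -/
theorem ecmImpulse_decreasing (R0 R1 R2 C1 C2 Q β ts : ℝ)
    (hR0 : 0 < R0) (hR1 : 0 < R1) (hR2 : 0 < R2)
    (hC1 : 0 < C1) (hC2 : 0 < C2) (hQ : 0 < Q) (hβ : 0 < β)
    (hts : 0 < ts)
    (hts1 : ts ≤ min (R1 * C1) (R2 * C2))
    (hts2 : ts ≤ R0 / (1 / C1 + 1 / C2 + β / Q)) :
    ∀ t : ℕ, ecmImpulse R0 R1 R2 C1 C2 Q β ts (t + 1) ≤
      ecmImpulse R0 R1 R2 C1 C2 Q β ts t :=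
  ecmImpulse_decreasing_general R0 R1 R2 C1 C2 Q β ts hC1 hC2 hQ hβ hts hts1 hts2
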